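/- (General IV estimand with arbitrary skill dynamics.) Suppose cov(θ_t, ε_{t'}) = 0 for all integers t, t' and cov(ε_t, ε_{t'}) = 0 whenever |t − t'| ≥ k. Then for all integers t, t' with either t − t' ≥ k + 1 or t' − t ≥ k, if cov(w_{t−1}, w_{t'}) ≠ 0, then cov(w_t − w_{t−1}, w_{t'}) / cov(w_{t−1}, w_{t'}) = (μ_t − μ_{t−1}) / μ_{t−1} + (μ_t / μ_{t−1}) · cov(θ_t − θ_{t−1}, θ_{t'}) / cov(θ_{t−1}, θ_{t'}); in particular μ_{t−1} ≠ 0 and cov(θ_{t−1}, θ_{t'}) ≠ 0. -/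

import Mathlib

open MeasureTheory ProbabilityTheory

/-- Covariance of two real-valued random variables under measure `P`. -/
noncomputable def cov {Ω : Type*} [MeasurableSpace Ω] (P : Measure Ω) (X Y : Ω → ℝ) : ℝ :=
  ∫ ω, (X ω - ∫ a, X a ∂P) * (Y ω - ∫ a, Y a ∂P) ∂P

/-- Variance of a real-valued random variable under measure `P`. -/
noncomputable def Var {Ω : Type*} [MeasurableSpace Ω] (P : Measure Ω) (X : Ω → ℝ) : ℝ :=
  cov P X X

/-!
At lags `|s - t'| ≥ k` the non-skill shocks are uncorrelated with everything the instrument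
`w t'` contains, so `cov(w s, w t') = μ s μ t' cov(θ s, θ t')` for `s = t - 1` and `s = t`.
The IV estimand is then a ratio in which the common factor `μ t'` cancels, and its nonvanishing
denominator forces `μ (t - 1) ≠ 0` and `cov(θ (t - 1), θ t') ≠ 0`.
-/

lemma cov_eq_covariance {Ω : Type*} [MeasurableSpace Ω] (P : Measure Ω) (X Y : Ω → ℝ) :
    cov P X Y = cov[X, Y; P] :=
  rfl

lemma covariance_const_mul_add_const_mul_add {Ω : Type*} [MeasurableSpace Ω] {P : Measure Ω}
    [IsFiniteMeasure P] {X X' E E' : Ω → ℝ} (a b : ℝ)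
    (hX : MemLp X 2 P) (hX' : MemLp X' 2 P) (hE : MemLp E 2 P) (hE' : MemLp E' 2 P)
    (hXE' : cov[X, E'; P] = 0) (hEX' : cov[E, X'; P] = 0) (hEE' : cov[E, E'; P] = 0) :
    cov[fun ω => a * X ω + E ω, fun ω => b * X' ω + E' ω; P] = a * b * cov[X, X'; P] := by
  change cov[(fun ω => a * X ω) + E, (fun ω => b * X' ω) + E'; P] = _
  have haX := hX.const_mul a
  have hbX' := hX'.const_mul b
  rw [covariance_add_left haX hE (hbX'.add hE'), covariance_add_right haX hbX' hE',
    covariance_add_right hE hbX' hE', covariance_const_mul_left, covariance_const_mul_right,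
    covariance_const_mul_left, covariance_const_mul_right, hXE', hEX', hEE']
  ring

theorem IV_estimand_general_skill_dynamics_general
    {Ω : Type*} [MeasurableSpace Ω] (P : Measure Ω) [IsProbabilityMeasure P]
    (θ ε : ℤ → Ω → ℝ) (μ : ℤ → ℝ) (w : ℤ → Ω → ℝ)
    (hθ : ∀ t, MemLp (θ t) 2 P) (hε : ∀ t, MemLp (ε t) 2 P)
    (hw : ∀ t ω, w t ω = μ t * θ t ω + ε t ω)
    (k : ℕ)
    (hθε : ∀ t t' : ℤ, cov P (θ t) (ε t') = 0)
    (hεε : ∀ t t' : ℤ, (k : ℤ) ≤ |t - t'| → cov P (ε t) (ε t') = 0) :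
    ∀ t t' : ℤ, ((k : ℤ) + 1 ≤ t - t' ∨ (k : ℤ) ≤ t' - t) →
      cov P (w (t - 1)) (w t') ≠ 0 →
      μ (t - 1) ≠ 0 ∧ cov P (θ (t - 1)) (θ t') ≠ 0 ∧
        cov P (fun ω => w t ω - w (t - 1) ω) (w t') / cov P (w (t - 1)) (w t') =
          (μ t - μ (t - 1)) / μ (t - 1) +
            (μ t / μ (t - 1)) *
              (cov P (fun ω => θ t ω - θ (t - 1) ω) (θ t') / cov P (θ (t - 1)) (θ t')) := by
  simp only [cov_eq_covariance] at *
  have hw_memLp : ∀ s, MemLp (w s) 2 P := fun s => by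
    rw [funext (hw s)]; exact ((hθ s).const_mul _).add (hε s)
  have cov_w_far : ∀ s u : ℤ, (k : ℤ) ≤ |s - u| →
      cov[w s, w u; P] = μ s * μ u * cov[θ s, θ u; P] := fun s u hsu => by
    rw [funext (hw s), funext (hw u)]
    exact covariance_const_mul_add_const_mul_add _ _ (hθ s) (hθ u) (hε s) (hε u) (hθε s u)
      (by rw [covariance_comm, hθε]) (hεε s u hsu)
  intro t t' ht hne
  have hfar : (k : ℤ) ≤ |t - 1 - t'| ∧ (k : ℤ) ≤ |t - t'| := by
    rw [le_abs, le_abs]; omega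
  rw [cov_w_far _ _ hfar.1] at hne
  obtain ⟨⟨hμ, hμ'⟩, hθθ⟩ := by simpa only [ne_eq, mul_eq_zero, not_or] using hne
  refine ⟨hμ, hθθ, ?_⟩
  rw [covariance_fun_sub_left (hw_memLp t) (hw_memLp (t - 1)) (hw_memLp t'), cov_w_far _ _ hfar.1,
    cov_w_far _ _ hfar.2, covariance_fun_sub_left (hθ t) (hθ (t - 1)) (hθ t')]
  field_simp
  ring

/-- General IV estimand with arbitrary skill dynamics: using past (`t - t' ≥ k + 1`) or
future (`t' - t ≥ k`) residuals as instruments, the IV estimand equals the return growth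
plus a skill-dynamics bias term. -/
theorem IV_estimand_general_skill_dynamics
    {Ω : Type*} [MeasurableSpace Ω] (P : Measure Ω) [IsProbabilityMeasure P]
    (θ ε : ℤ → Ω → ℝ) (μ : ℤ → ℝ) (w : ℤ → Ω → ℝ)
    (hθ : ∀ t, MemLp (θ t) 2 P) (hε : ∀ t, MemLp (ε t) 2 P)
    (hw : ∀ t ω, w t ω = μ t * θ t ω + ε t ω)
    (k : ℕ) (hk : 1 ≤ k)
    (hθε : ∀ t t' : ℤ, cov P (θ t) (ε t') = 0)
    (hεε : ∀ t t' : ℤ, (k : ℤ) ≤ |t - t'| → cov P (ε t) (ε t') = 0) :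
    ∀ t t' : ℤ, ((k : ℤ) + 1 ≤ t - t' ∨ (k : ℤ) ≤ t' - t) →
      cov P (w (t - 1)) (w t') ≠ 0 →
      μ (t - 1) ≠ 0 ∧ cov P (θ (t - 1)) (θ t') ≠ 0 ∧
        cov P (fun ω => w t ω - w (t - 1) ω) (w t') / cov P (w (t - 1)) (w t') =
          (μ t - μ (t - 1)) / μ (t - 1) +
            (μ t / μ (t - 1)) *
              (cov P (fun ω => θ t ω - θ (t - 1) ω) (θ t') / cov P (θ (t - 1)) (θ t')) :=
  IV_estimand_general_skill_dynamics_general P θ ε μ w hθ hε hw k hθε hεε
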